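/- arXiv:1502.00063 — 4 statements merged into one kernel-verified Lean document; each statement's English description precedes it below -/
import Mathlib

section
/- Let (a_n)_{n=0}^∞ be a Leja sequence on the unit circle S¹. Then lim_{N→∞} E_0(α_N)/(N log N) = −1. -/
open Filter Topology

/-- Logarithmic energy of the first `N` points of the sequence `a`. -/
noncomputable def logEnergy (a : ℕ → ℂ) (N : ℕ) : ℝ :=
  ∑ i ∈ Finset.range N, ∑ j ∈ Finset.range N,
    if i ≠ j then Real.log (1 / ‖a i - a j‖) else 0

/-- `a` is a Leja sequence on the unit circle: all points lie on the circle and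
`a (n+1)` maximizes `∏_{i=0}^{n} |z - a i|` over the circle. -/
def IsLejaSeq (a : ℕ → ℂ) : Prop :=
  (∀ n, ‖a n‖ = 1) ∧
  ∀ n : ℕ, ∀ z : ℂ, ‖z‖ = 1 →
    ∏ i ∈ Finset.range (n + 1), ‖z - a i‖ ≤
      ∏ i ∈ Finset.range (n + 1), ‖a (n + 1) - a i‖

/-!
By induction on `n`, `∏_{k<n} (z - a k) = ∏_{j ∈ bits n} (z ^ 2 ^ j + w ^ 2 ^ j)` for some
unimodular `w`. On the circle every factor has modulus at most `2`, with equality at `z = w`,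
so maximality of `a n` forces `a n ^ 2 ^ j = w ^ 2 ^ j` for every bit `j` of `n`. Writing
`n + 1 = 2 ^ v * odd`, the factors for the bits `j < v` of `n` telescope with `z - a n` into
`z ^ 2 ^ v + (ξ * a n) ^ 2 ^ v` with `ξ ^ 2 ^ v = -1`, and the higher factors are unchanged by
`w ↦ ξ * a n`: this is the representation for `n + 1`. Hence
`∏_{k<n} |a n - a k| = 2 ^ s(n)`, `s(n)` the binary digit sum, and
`E₀(α_N) = -2 log 2 · ∑_{n<N} s(n)`. Splitting `N = 2 ^ L + r` with `r < 2 ^ L` gives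
`∑_{n<N} s(n) = N L / 2 + O(N)` for `L = ⌊log₂ N⌋`.
-/

open Finset

namespace Nat

theorem bitIndices_two_pow_mul_odd (v t : ℕ) :
    (2 ^ v * (2 * t + 1)).bitIndices = v :: t.bitIndices.map (· + (v + 1)) := by
  rw [bitIndices_two_pow_mul, bitIndices_two_mul_add_one]
  simp [Function.comp_def, add_comm, add_left_comm]

theorem bitIndices_two_pow_mul_odd_sub_one (v t : ℕ) :
    (2 ^ v * (2 * t + 1) - 1).bitIndices = List.range v ++ t.bitIndices.map (· + (v + 1)) := by
  induction v with
  | zero => simp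
  | succ v ih =>
    have h : 2 ^ (v + 1) * (2 * t + 1) - 1 = 2 * (2 ^ v * (2 * t + 1) - 1) + 1 := by
      have : 0 < 2 ^ v * (2 * t + 1) := by positivity
      rw [pow_succ, mul_right_comm]; omega
    rw [h, bitIndices_two_mul_add_one, ih, List.range_succ_eq_map]
    simp [List.map_map, Function.comp_def, add_assoc, add_comm 1]

theorem bitIndices_two_pow_add {k t : ℕ} (ht : t < 2 ^ k) :
    (2 ^ k + t).bitIndices = t.bitIndices ++ [k] := by
  have hsorted : (t.bitIndices ++ [k]).SortedLT := by
    rw [List.sortedLT_iff_pairwise, List.pairwise_append]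
    refine ⟨List.sortedLT_iff_pairwise.1 bitIndices_sorted, by simp, fun i hi j hj => ?_⟩
    rw [List.mem_singleton.1 hj]
    exact (Nat.pow_lt_pow_iff_right one_lt_two).1
      ((two_pow_le_of_mem_bitIndices hi).trans_lt ht)
  simpa [add_comm] using bitIndices_sum_map_two_pow hsorted

theorem exists_eq_two_pow_log_add {N : ℕ} (hN : N ≠ 0) :
    ∃ r < 2 ^ Nat.log 2 N, N = 2 ^ Nat.log 2 N + r := by
  have h1 := Nat.pow_log_le_self 2 hN
  have h2 := Nat.lt_pow_succ_log_self one_lt_two N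
  rw [pow_succ] at h2
  exact ⟨N - 2 ^ Nat.log 2 N, by omega, by omega⟩

end Nat

theorem Complex.exists_norm_eq_one_pow_eq_neg_one {n : ℕ} (hn : n ≠ 0) :
    ∃ ξ : ℂ, ‖ξ‖ = 1 ∧ ξ ^ n = -1 := by
  obtain ⟨ξ, hξ⟩ := IsAlgClosed.exists_pow_nat_eq (-1 : ℂ) (Nat.pos_of_ne_zero hn)
  refine ⟨ξ, Complex.norm_eq_one_of_pow_eq_one (n := 2 * n) ?_ (by omega), hξ⟩
  rw [pow_mul', hξ, neg_one_sq]

section UnitCircle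

variable {ι : Type*} {x y : ι → ℂ}

theorem norm_prod_map_add_le_two_pow (L : List ι) (hx : ∀ i ∈ L, ‖x i‖ = 1)
    (hy : ∀ i ∈ L, ‖y i‖ = 1) : ‖(L.map fun i => x i + y i).prod‖ ≤ 2 ^ L.length := by
  induction L with
  | nil => simp
  | cons i L ih =>
    simp only [List.forall_mem_cons] at hx hy
    have hi : ‖x i + y i‖ ≤ 2 := (norm_add_le _ _).trans (by rw [hx.1, hy.1]; norm_num)
    rw [List.map_cons, List.prod_cons, norm_mul, List.length_cons, pow_succ']
    exact mul_le_mul hi (ih hx.2 hy.2) (norm_nonneg _) zero_le_two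

theorem eq_of_norm_prod_map_add_eq_two_pow (L : List ι) (hx : ∀ i ∈ L, ‖x i‖ = 1)
    (hy : ∀ i ∈ L, ‖y i‖ = 1) (h : ‖(L.map fun i => x i + y i).prod‖ = 2 ^ L.length) :
    ∀ i ∈ L, x i = y i := by
  induction L with
  | nil => simp
  | cons i L ih =>
    simp only [List.forall_mem_cons] at hx hy ⊢
    have hi : ‖x i + y i‖ ≤ 2 := (norm_add_le _ _).trans (by rw [hx.1, hy.1]; norm_num)
    have hL := norm_prod_map_add_le_two_pow L hx.2 hy.2
    rw [List.map_cons, List.prod_cons, norm_mul, List.length_cons, pow_succ'] at h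
    have hpos : 0 < ‖x i + y i‖ := by
      refine (norm_nonneg _).lt_of_ne fun h0 => ?_
      rw [← h0, zero_mul] at h
      exact (by positivity : (0 : ℝ) < 2 * 2 ^ L.length).ne h
    obtain ⟨hi2, hL2⟩ := (mul_eq_mul_iff_eq_and_eq_of_pos hi hL hpos (pow_pos two_pos _)).1 h
    refine ⟨eq_of_norm_eq_of_norm_add_eq (hx.1.trans hy.1.symm) ?_, ih hx.2 hy.2 hL2⟩
    rw [hi2, hx.1, hy.1]; norm_num

end UnitCircle

section BitProd

variable {R : Type*} [CommRing R]

def bitProd (n : ℕ) (w z : R) : R :=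
  (n.bitIndices.map fun j => z ^ 2 ^ j + w ^ 2 ^ j).prod

theorem bitProd_congr {n : ℕ} {w c : R} (h : ∀ j ∈ n.bitIndices, w ^ 2 ^ j = c ^ 2 ^ j)
    (z : R) : bitProd n w z = bitProd n c z := by
  unfold bitProd
  rw [List.map_congr_left fun j hj => by rw [h j hj]]

theorem bitProd_mul_sub {n v t : ℕ} (hn : n + 1 = 2 ^ v * (2 * t + 1)) {ξ : R}
    (hξ : ξ ^ 2 ^ v = -1) (c z : R) :
    bitProd n c z * (z - c) = bitProd (n + 1) (ξ * c) z := by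
  have hhigh : ∀ i, (ξ * c) ^ 2 ^ (i + (v + 1)) = c ^ 2 ^ (i + (v + 1)) := fun i => by
    rw [mul_pow, show 2 ^ (i + (v + 1)) = 2 ^ v * 2 ^ (i + 1) by ring, pow_mul, hξ,
      Even.neg_one_pow ⟨2 ^ i, by ring⟩, one_mul]
  obtain rfl : n = 2 ^ v * (2 * t + 1) - 1 := by omega
  unfold bitProd
  rw [hn, Nat.bitIndices_two_pow_mul_odd_sub_one, Nat.bitIndices_two_pow_mul_odd,
    List.map_append, List.prod_append, List.map_cons, List.prod_cons, mul_pow, hξ, List.map_map,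
    List.map_map]
  simp only [Function.comp_def, hhigh]
  rw [← List.prod_toFinset _ List.nodup_range, List.toFinset_range]
  linear_combination -(List.map (fun i => z ^ 2 ^ (i + (v + 1)) + c ^ 2 ^ (i + (v + 1)))
    t.bitIndices).prod * pow_two_pow_sub_pow_two_pow (x := z) (y := c) v

variable {n : ℕ} {w z : ℂ}

theorem norm_bitProd_le (hw : ‖w‖ = 1) (hz : ‖z‖ = 1) :
    ‖bitProd n w z‖ ≤ 2 ^ n.bitIndices.length :=
  norm_prod_map_add_le_two_pow _ (fun _ _ => by rw [norm_pow, hz, one_pow])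
    (fun _ _ => by rw [norm_pow, hw, one_pow])

theorem norm_bitProd_self (hw : ‖w‖ = 1) : ‖bitProd n w w‖ = 2 ^ n.bitIndices.length := by
  simp [bitProd, ← two_mul, List.norm_prod, Function.comp_def, hw]

theorem pow_two_pow_eq_of_norm_bitProd (hw : ‖w‖ = 1) (hz : ‖z‖ = 1)
    (h : ‖bitProd n w z‖ = 2 ^ n.bitIndices.length) :
    ∀ j ∈ n.bitIndices, z ^ 2 ^ j = w ^ 2 ^ j :=
  eq_of_norm_prod_map_add_eq_two_pow _ (fun _ _ => by rw [norm_pow, hz, one_pow])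
    (fun _ _ => by rw [norm_pow, hw, one_pow]) h

end BitProd

theorem Finset.sum_range_sum_range_of_symm {M : Type*} [AddCommMonoid M] (f : ℕ → ℕ → M)
    (hf : ∀ i j, f i j = f j i) (hdiag : ∀ i, f i i = 0) (N : ℕ) :
    ∑ i ∈ range N, ∑ j ∈ range N, f i j =
      2 • ∑ i ∈ range N, ∑ j ∈ range i, f i j := by
  induction N with
  | zero => simp
  | succ N ih =>
    simp only [sum_range_succ, sum_add_distrib, ih, hdiag, add_zero, smul_add, two_smul]
    rw [sum_congr rfl fun i _ => hf i N]
    abel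

theorem logEnergy_eq_neg_two_mul_sum (a : ℕ → ℂ) (N : ℕ) :
    logEnergy a N = -2 * ∑ n ∈ range N, ∑ k ∈ range n, Real.log ‖a n - a k‖ := by
  rw [logEnergy, sum_range_sum_range_of_symm _ (fun i j => by simp only [ne_comm, norm_sub_rev])
    (fun i => if_neg (not_not.2 rfl)), nsmul_eq_mul, Nat.cast_two, neg_mul, ← mul_neg,
    ← sum_neg_distrib]
  refine congrArg _ (sum_congr rfl fun n _ => ?_)
  rw [← sum_neg_distrib]
  refine sum_congr rfl fun k hk => ?_
  rw [if_pos (mem_range.1 hk).ne', one_div, Real.log_inv]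

def bitCountSum (N : ℕ) : ℕ := ∑ n ∈ range N, n.bitIndices.length

theorem bitCountSum_two_pow_add {k r : ℕ} (hr : r ≤ 2 ^ k) :
    bitCountSum (2 ^ k + r) = bitCountSum (2 ^ k) + r + bitCountSum r := by
  have h : ∀ t ∈ range r, (2 ^ k + t).bitIndices.length = t.bitIndices.length + 1 :=
    fun t ht => by
      rw [Nat.bitIndices_two_pow_add ((mem_range.1 ht).trans_le hr), List.length_append,
        List.length_singleton]
  rw [bitCountSum, sum_range_add, sum_congr rfl h, sum_add_distrib, sum_const, card_range,
    smul_eq_mul, mul_one, ← bitCountSum, ← bitCountSum]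
  ring

theorem two_mul_bitCountSum_two_pow (k : ℕ) : 2 * bitCountSum (2 ^ k) = k * 2 ^ k := by
  induction k with
  | zero => rfl
  | succ k ih =>
    rw [pow_succ, mul_two, bitCountSum_two_pow_add le_rfl]
    linear_combination 2 * ih

theorem two_mul_bitCountSum_two_pow_add {k r : ℕ} (hr : r ≤ 2 ^ k) :
    2 * bitCountSum (2 ^ k + r) = k * 2 ^ k + 2 * r + 2 * bitCountSum r := by
  rw [bitCountSum_two_pow_add hr, mul_add, mul_add, two_mul_bitCountSum_two_pow]

theorem two_mul_bitCountSum_le (N : ℕ) : 2 * bitCountSum N ≤ N * Nat.log 2 N + N := by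
  induction N using Nat.strong_induction_on with
  | _ N ih =>
  rcases eq_or_ne N 0 with rfl | hN
  · rfl
  obtain ⟨r, hr, hNr⟩ := Nat.exists_eq_two_pow_log_add hN
  set L := Nat.log 2 N
  have hrL : r * Nat.log 2 r + r ≤ r * L := by
    rw [← mul_add_one]
    rcases eq_or_ne r 0 with rfl | hr0
    · simp
    · exact Nat.mul_le_mul_left r (Nat.log_lt_of_lt_pow hr0 hr)
  have h := two_mul_bitCountSum_two_pow_add hr.le
  have hNL : N * L = L * 2 ^ L + r * L := by rw [hNr]; ring
  have := ih r (by omega)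
  rw [← hNr] at h
  omega

theorem mul_log_le_two_mul_bitCountSum (N : ℕ) :
    N * Nat.log 2 N ≤ 2 * bitCountSum N + 2 * N := by
  induction N using Nat.strong_induction_on with
  | _ N ih =>
  rcases eq_or_ne N 0 with rfl | hN
  · rfl
  obtain ⟨r, hr, hNr⟩ := Nat.exists_eq_two_pow_log_add hN
  set L := Nat.log 2 N
  obtain ⟨d, hd⟩ : ∃ d, L = Nat.log 2 r + d :=
    Nat.exists_eq_add_of_le (Nat.log_mono_right (b := 2) (show r ≤ N by omega))
  have hrd : r * d ≤ 2 * 2 ^ L := by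
    calc r * d ≤ 2 ^ (Nat.log 2 r + 1) * 2 ^ d :=
          Nat.mul_le_mul (Nat.lt_pow_succ_log_self one_lt_two r).le Nat.lt_two_pow_self.le
      _ = 2 * 2 ^ L := by rw [hd]; ring
  have h := two_mul_bitCountSum_two_pow_add hr.le
  have hNL : N * L = L * 2 ^ L + r * Nat.log 2 r + r * d := by rw [hNr, hd]; ring
  have := ih r (by omega)
  rw [← hNr] at h
  omega

theorem abs_two_mul_bitCountSum_mul_log_two_sub_le {N : ℕ} (hN : N ≠ 0) :
    |2 * bitCountSum N * Real.log 2 - N * Real.log N| ≤ 3 * Real.log 2 * N := by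
  set L := Nat.log 2 N
  have hlog2 : 0 < Real.log 2 := Real.log_pos one_lt_two
  have hN0 : (0 : ℝ) ≤ N := N.cast_nonneg
  have hlo : L * Real.log 2 ≤ Real.log N := by
    rw [← Real.log_pow]
    exact Real.log_le_log (by positivity) (by exact_mod_cast Nat.pow_log_le_self 2 hN)
  have hhi : Real.log N ≤ (L + 1) * Real.log 2 := by
    rw [← Nat.cast_add_one, ← Real.log_pow]
    exact Real.log_le_log (by positivity)
      (by exact_mod_cast (Nat.lt_pow_succ_log_self one_lt_two N).le)
  have hS₁ : (N : ℝ) * L ≤ 2 * bitCountSum N + 2 * N := by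
    exact_mod_cast mul_log_le_two_mul_bitCountSum N
  have hS₂ : 2 * (bitCountSum N : ℝ) ≤ N * L + N := by
    exact_mod_cast two_mul_bitCountSum_le N
  have := mul_le_mul_of_nonneg_left hlo hN0
  have := mul_le_mul_of_nonneg_left hhi hN0
  have := mul_le_mul_of_nonneg_right hS₁ hlog2.le
  have := mul_le_mul_of_nonneg_right hS₂ hlog2.le
  rw [abs_le]
  constructor <;> linarith

namespace IsLejaSeq

variable {a : ℕ → ℂ}

theorem prod_norm_sub_le (ha : IsLejaSeq a) (n : ℕ) {z : ℂ} (hz : ‖z‖ = 1) :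
    ∏ k ∈ range n, ‖z - a k‖ ≤ ∏ k ∈ range n, ‖a n - a k‖ := by
  cases n with
  | zero => simp
  | succ n => exact ha.2 n z hz

theorem norm_bitProd_eq_of_prod_sub_eq (ha : IsLejaSeq a) {n : ℕ} {w : ℂ} (hw : ‖w‖ = 1)
    (hrep : ∀ z, ∏ k ∈ range n, (z - a k) = bitProd n w z) :
    ‖bitProd n w (a n)‖ = 2 ^ n.bitIndices.length := by
  refine le_antisymm (norm_bitProd_le hw (ha.1 n)) ?_
  calc (2 : ℝ) ^ n.bitIndices.length = ‖bitProd n w w‖ := (norm_bitProd_self hw).symm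
    _ = ∏ k ∈ range n, ‖w - a k‖ := by rw [← hrep, norm_prod]
    _ ≤ ∏ k ∈ range n, ‖a n - a k‖ := ha.prod_norm_sub_le n hw
    _ = ‖bitProd n w (a n)‖ := by rw [← hrep, norm_prod]

theorem exists_prod_sub_eq_bitProd (ha : IsLejaSeq a) (n : ℕ) :
    ∃ w : ℂ, ‖w‖ = 1 ∧ ∀ z, ∏ k ∈ range n, (z - a k) = bitProd n w z := by
  induction n with
  | zero => exact ⟨1, norm_one, fun z => by simp [bitProd]⟩
  | succ n ih =>
    obtain ⟨w, hw, hrep⟩ := ih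
    obtain ⟨v, _, ⟨t, rfl⟩, hv⟩ := Nat.exists_eq_two_pow_mul_odd n.succ_ne_zero
    obtain ⟨ξ, hξ1, hξ⟩ :=
      Complex.exists_norm_eq_one_pow_eq_neg_one (pow_ne_zero v two_ne_zero)
    have hpow := pow_two_pow_eq_of_norm_bitProd hw (ha.1 n)
      (ha.norm_bitProd_eq_of_prod_sub_eq hw hrep)
    refine ⟨ξ * a n, by rw [norm_mul, hξ1, ha.1 n, one_mul], fun z => ?_⟩
    rw [prod_range_succ, hrep, bitProd_congr (fun j hj => (hpow j hj).symm),
      bitProd_mul_sub hv hξ]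

theorem prod_norm_sub_eq (ha : IsLejaSeq a) (n : ℕ) :
    ∏ k ∈ range n, ‖a n - a k‖ = 2 ^ n.bitIndices.length := by
  obtain ⟨w, hw, hrep⟩ := ha.exists_prod_sub_eq_bitProd n
  rw [← norm_prod, hrep]
  exact ha.norm_bitProd_eq_of_prod_sub_eq hw hrep

theorem sum_log_norm_sub_eq (ha : IsLejaSeq a) (n : ℕ) :
    ∑ k ∈ range n, Real.log ‖a n - a k‖ = n.bitIndices.length * Real.log 2 := by
  have h := ha.prod_norm_sub_eq n
  have hne := prod_ne_zero_iff.1 (h ▸ pow_ne_zero _ two_ne_zero)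
  rw [← Real.log_prod hne, h, Real.log_pow]

theorem logEnergy_eq (ha : IsLejaSeq a) (N : ℕ) :
    logEnergy a N = -2 * Real.log 2 * bitCountSum N := by
  simp only [logEnergy_eq_neg_two_mul_sum, ha.sum_log_norm_sub_eq, ← sum_mul, bitCountSum,
    Nat.cast_sum]
  ring

end IsLejaSeq

theorem leja_logEnergy_firstOrder (a : ℕ → ℂ) (ha : IsLejaSeq a) :
    Tendsto (fun N : ℕ => logEnergy a N / ((N : ℝ) * Real.log N)) atTop (𝓝 (-1)) := by
  have hbound : Tendsto (fun N : ℕ => 3 * Real.log 2 / Real.log N) atTop (𝓝 0) :=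
    tendsto_const_nhds.div_atTop (Real.tendsto_log_atTop.comp tendsto_natCast_atTop_atTop)
  rw [← tendsto_sub_nhds_zero_iff]
  refine squeeze_zero_norm' ?_ hbound
  filter_upwards [eventually_gt_atTop 1] with N hN
  have hlogN : 0 < Real.log N := Real.log_pos (by exact_mod_cast hN)
  have hNlogN : 0 < (N : ℝ) * Real.log N := mul_pos (by positivity) hlogN
  have hE : logEnergy a N / (N * Real.log N) - -1 =
      -((2 * bitCountSum N * Real.log 2 - N * Real.log N) / (N * Real.log N)) := by
    rw [ha.logEnergy_eq]
    field_simp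
    ring
  calc ‖logEnergy a N / (N * Real.log N) - -1‖
      = |2 * bitCountSum N * Real.log 2 - N * Real.log N| / (N * Real.log N) := by
        rw [hE, norm_neg, norm_div, Real.norm_eq_abs, Real.norm_of_nonneg hNlogN.le]
    _ ≤ 3 * Real.log 2 * N / (N * Real.log N) := by
        gcongr
        exact abs_two_mul_bitCountSum_mul_log_two_sub_le (by omega)
    _ = 3 * Real.log 2 / Real.log N := by field_simp
end

section
/- Let N = 2^{n_1} + 2^{n_2} + ⋯ + 2^{n_t} with integers n_1 > n_2 > ⋯ > n_t ≥ 0. Then Σ_{k=1}^{N−1} τ(k) = Σ_{i=1}^{t} (n_i + 2(i−1)) · 2^{n_i − 1}, where the right-hand side is interpreted as a sum of real numbers (so 2^{n_i − 1} = 1/2 when n_i = 0). -/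
/-!
If `2 ^ m ∣ a` and `r < 2 ^ m`, the binary digits of `a + r` are those of `r` followed by
those of `a`, so `τ(a + r) = τ(a) + τ(r)`. Hence the block `[a, a + 2 ^ m)` contributes
`2 ^ m τ(a) + S(2 ^ m)`, where `S(x) = ∑_{k < x} τ(k)` and `2 S(2 ^ m) = m 2 ^ m`.
Splitting `[0, N)` into blocks of lengths `2 ^ (n i)` in order, the `i`-th block starts at a
number with exactly `i` ones, which gives the formula. Everything is doubled so as to stay in `ℕ`.
-/

open Filter Topology

/-- τ(k): the number of ones in the binary representation of `k`. -/
def tau (k : ℕ) : ℕ := (Nat.digits 2 k).sum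

open Finset

@[simp]
lemma tau_zero : tau 0 = 0 := rfl

lemma tau_add_two_pow_mul {m r : ℕ} (hr : r < 2 ^ m) (q : ℕ) :
    tau (r + 2 ^ m * q) = tau r + tau q := by
  rcases q.eq_zero_or_pos with rfl | hq
  · simp
  have hlen : (Nat.digits 2 r).length ≤ m := (Nat.digits_length_le_iff one_lt_two r).2 hr
  have := Nat.digits_append_zeroes_append_digits (k := m - (Nat.digits 2 r).length)
    (n := r) one_lt_two hq
  rw [Nat.add_sub_cancel' hlen] at this
  simp [tau, ← this]

lemma tau_two_pow (m : ℕ) : tau (2 ^ m) = 1 := by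
  simpa [tau] using tau_add_two_pow_mul (Nat.two_pow_pos m) 1

lemma tau_add_of_two_pow_dvd {m a r : ℕ} (ha : 2 ^ m ∣ a) (hr : r < 2 ^ m) :
    tau (a + r) = tau a + tau r := by
  obtain ⟨q, rfl⟩ := ha
  have htau_mul : tau (2 ^ m * q) = tau q := by
    simpa using tau_add_two_pow_mul (Nat.two_pow_pos m) q
  rw [add_comm, tau_add_two_pow_mul hr, htau_mul, add_comm]

lemma tau_add_two_pow {m a : ℕ} (ha : 2 ^ (m + 1) ∣ a) : tau (a + 2 ^ m) = tau a + 1 := by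
  rw [tau_add_of_two_pow_dvd ha (Nat.pow_lt_pow_right one_lt_two m.lt_succ_self), tau_two_pow]

lemma sum_range_tau_add_two_pow {m a : ℕ} (ha : 2 ^ m ∣ a) :
    ∑ k ∈ range (a + 2 ^ m), tau k
      = ∑ k ∈ range a, tau k + 2 ^ m * tau a + ∑ k ∈ range (2 ^ m), tau k := by
  rw [sum_range_add, sum_congr rfl fun r hr => tau_add_of_two_pow_dvd ha (mem_range.1 hr),
    sum_add_distrib, sum_const, card_range, smul_eq_mul, add_assoc]

lemma two_mul_sum_range_tau_two_pow (m : ℕ) : 2 * ∑ k ∈ range (2 ^ m), tau k = m * 2 ^ m := by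
  induction m with
  | zero => simp
  | succ m ih =>
    rw [pow_succ, mul_two, sum_range_tau_add_two_pow dvd_rfl, tau_two_pow]
    linear_combination 2 * ih

lemma two_pow_succ_dvd_sum_castSucc {t : ℕ} {n : Fin (t + 1) → ℕ} (hn : StrictAnti n) :
    2 ^ (n (Fin.last t) + 1) ∣ ∑ i : Fin t, 2 ^ n i.castSucc :=
  dvd_sum fun i _ => pow_dvd_pow 2 (hn (Fin.castSucc_lt_last i))

lemma tau_sum_two_pow {t : ℕ} {n : Fin t → ℕ} (hn : StrictAnti n) :
    tau (∑ i, 2 ^ n i) = t := by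
  induction t with
  | zero => simp
  | succ t ih =>
    rw [Fin.sum_univ_castSucc, tau_add_two_pow (two_pow_succ_dvd_sum_castSucc hn),
      ih (n := fun i => n i.castSucc) (hn.comp_strictMono Fin.strictMono_castSucc)]

lemma two_mul_sum_range_tau_sum_two_pow {t : ℕ} {n : Fin t → ℕ} (hn : StrictAnti n) :
    2 * ∑ k ∈ range (∑ i, 2 ^ n i), tau k = ∑ i, (n i + 2 * i) * 2 ^ n i := by
  induction t with
  | zero => simp
  | succ t ih =>
    have hn' : StrictAnti fun i : Fin t => n i.castSucc := hn.comp_strictMono Fin.strictMono_castSucc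
    rw [Fin.sum_univ_castSucc, Fin.sum_univ_castSucc,
      sum_range_tau_add_two_pow (dvd_trans (pow_dvd_pow 2 (Nat.le_succ _))
        (two_pow_succ_dvd_sum_castSucc hn)),
      mul_add, mul_add, ih hn', tau_sum_two_pow hn', two_mul_sum_range_tau_two_pow]
    simp only [Fin.val_castSucc, Fin.val_last]
    ring

lemma sum_Icc_one_sub_one_eq_sum_range {M : Type*} [AddCommMonoid M] {f : ℕ → M} (h0 : f 0 = 0)
    (N : ℕ) : ∑ k ∈ Icc 1 (N - 1), f k = ∑ k ∈ range N, f k := by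
  rcases N.eq_zero_or_pos with rfl | hN
  · simp
  · rw [Icc_sub_one_right_eq_Ico_of_not_isMin (by simpa using hN.ne'), range_eq_Ico,
      sum_eq_sum_Ico_succ_bot hN, h0, zero_add]

theorem sum_tau_binary_general (t : ℕ) (n : Fin t → ℕ) (hn : StrictAnti n)
    (N : ℕ) (hN : N = ∑ i : Fin t, 2 ^ (n i)) :
    (∑ k ∈ Finset.Icc 1 (N - 1), (tau k : ℝ))
      = ∑ i : Fin t, ((n i : ℝ) + 2 * (i : ℕ)) * (2 : ℝ) ^ (n i) / 2 := by
  have hsum : (2 * ∑ k ∈ range N, tau k : ℕ) = ∑ i, (n i + 2 * i) * 2 ^ n i := by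
    rw [hN, two_mul_sum_range_tau_sum_two_pow hn]
  rw [sum_Icc_one_sub_one_eq_sum_range (by simp), ← sum_div, eq_div_iff two_ne_zero, mul_comm]
  exact_mod_cast hsum

theorem sum_tau_binary (t : ℕ) (ht : 1 ≤ t) (n : Fin t → ℕ) (hn : StrictAnti n)
    (N : ℕ) (hN : N = ∑ i : Fin t, 2 ^ (n i)) :
    (∑ k ∈ Finset.Icc 1 (N - 1), (tau k : ℝ))
      = ∑ i : Fin t, ((n i : ℝ) + 2 * (i : ℕ)) * (2 : ℝ) ^ (n i) / 2 :=
  sum_tau_binary_general t n hn N hN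
end

section
/- Let s > 0, let n ≥ 0 be an integer, let ρ ∈ S¹, and let A = {ρ e^{2πij/2^n} : j = 0, 1, …, 2^n − 1} be a set of 2^n equally spaced points on S¹. Let y = ρ e^{πi(2j_0+1)/2^n} for some integer j_0, i.e., y is the midpoint of one of the 2^n arcs determined by the points of A. Then Σ_{x ∈ A} |x − y|^{−s} = 2^{−(n+1)} ℒ_s(2^{n+1}) − 2^{−n} ℒ_s(2^n). -/
/-! With `N = 2 ^ n`, the distance from `ρ e^{2πij/N}` to the midpoint is
`2 |sin ((2 (j - j0 - 1) + 1) π / (2N))|`; as `j` runs over a period these are the chords from a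
vertex of the regular `2N`-gon to its `N` vertices at odd offsets. Since `ℒ_s(M) / M` is the
potential at a vertex of the regular `M`-gon due to the others, splitting the offsets of the
`2N`-gon by parity gives `ℒ_s(2N) / (2N) = ℒ_s(N) / N + ` (the sum over odd offsets). -/

open Filter Topology

/-- `ℒ_s(N)`: the Riesz `s`-energy of `N` equally spaced points on the unit circle. -/
noncomputable def Lrz (s : ℝ) (N : ℕ) : ℝ :=
  (2 : ℝ) ^ (-s) * N * ∑ k ∈ Finset.Icc 1 (N - 1), Real.sin ((k : ℝ) * Real.pi / (N : ℝ)) ^ (-s)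

open Finset Real

theorem Function.Periodic.sum_range_add_one {M : Type*} [AddCancelCommMonoid M] {f : ℤ → M}
    {N : ℕ} (hf : Function.Periodic f N) (c : ℤ) :
    ∑ j ∈ range N, f (j + (c + 1)) = ∑ j ∈ range N, f (j + c) := by
  have h := (sum_range_succ' (fun j : ℕ => f (j + c)) N).symm.trans
    (sum_range_succ (fun j : ℕ => f (j + c)) N)
  rw [add_comm (N : ℤ) c, hf c] at h
  simp only [Nat.cast_add, Nat.cast_one, Nat.cast_zero, zero_add, add_assoc, add_comm (1 : ℤ) c]
    at h
  exact add_right_cancel h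

theorem Function.Periodic.sum_range_add {M : Type*} [AddCancelCommMonoid M] {f : ℤ → M}
    {N : ℕ} (hf : Function.Periodic f N) (c : ℤ) :
    ∑ j ∈ range N, f (j + c) = ∑ j ∈ range N, f j := by
  induction c using Int.induction_on with
  | zero => simp only [add_zero]
  | succ c ih => rw [hf.sum_range_add_one, ih]
  | pred c ih => rw [← ih, ← hf.sum_range_add_one, sub_add_cancel]

theorem Finset.sum_Icc_one_two_mul_sub_one {M : Type*} [AddCommMonoid M] (F : ℕ → M) {N : ℕ}
    (hN : 0 < N) :
    ∑ k ∈ Icc 1 (2 * N - 1), F k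
      = ∑ k ∈ Icc 1 (N - 1), F (2 * k) + ∑ m ∈ range N, F (2 * m + 1) := by
  induction N, hN using Nat.le_induction with
  | base => simp
  | succ N hN ih =>
    rw [show 2 * (N + 1) - 1 = 2 * N - 1 + 1 + 1 by omega, sum_Icc_succ_top (by omega),
      sum_Icc_succ_top (by omega), ih, show N + 1 - 1 = N - 1 + 1 by omega,
      sum_Icc_succ_top (by omega), sum_range_succ, show 2 * N - 1 + 1 = 2 * (N - 1 + 1) by omega,
      show 2 * (N - 1 + 1) + 1 = 2 * N + 1 by omega]
    abel

theorem Complex.norm_exp_mul_I_sub_exp_mul_I (a b : ℝ) :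
    ‖Complex.exp (a * Complex.I) - Complex.exp (b * Complex.I)‖
      = 2 * |Real.sin ((a - b) / 2)| := by
  have h : Complex.exp (a * Complex.I) - Complex.exp (b * Complex.I)
      = Complex.exp (b * Complex.I) * (Complex.exp (Complex.I * (a - b : ℝ)) - 1) := by
    rw [mul_sub, mul_one, ← Complex.exp_add]
    push_cast
    ring_nf
  rw [h, norm_mul, Complex.norm_exp_ofReal_mul_I, one_mul, Complex.norm_exp_I_mul_ofReal_sub_one,
    norm_mul, Real.norm_two, Real.norm_eq_abs]

theorem Lrz_div_self (s : ℝ) {N : ℕ} (hN : N ≠ 0) :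
    Lrz s N / N = 2 ^ (-s) * ∑ k ∈ Icc 1 (N - 1), sin (k * π / N) ^ (-s) := by
  rw [Lrz, mul_right_comm, mul_div_cancel_right₀ _ (Nat.cast_ne_zero.mpr hN)]

theorem Lrz_two_mul_div_sub_Lrz_div (s : ℝ) {N : ℕ} (hN : 0 < N) :
    Lrz s (2 * N) / (2 * N : ℕ) - Lrz s N / N
      = 2 ^ (-s) * ∑ m ∈ range N, sin ((2 * m + 1) * π / (2 * N)) ^ (-s) := by
  rw [Lrz_div_self s (by omega), Lrz_div_self s hN.ne', ← mul_sub,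
    sum_Icc_one_two_mul_sub_one _ hN]
  push_cast
  have hN' : (N : ℝ) ≠ 0 := by positivity
  have h_even (k : ℕ) : 2 * (k : ℝ) * π / (2 * N) = k * π / N := by
    field_simp
  simp only [h_even, add_sub_cancel_left]

theorem sum_range_two_mul_abs_sin_odd_rpow (t : ℝ) {N : ℕ} (hN : 0 < N) (c : ℤ) :
    ∑ j ∈ range N, (2 * |sin ((2 * ((j + c : ℤ) : ℝ) + 1) * π / (2 * N))|) ^ t
      = 2 ^ t * ∑ m ∈ range N, sin ((2 * m + 1) * π / (2 * N)) ^ t := by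
  have hN' : (N : ℝ) ≠ 0 := by positivity
  have hper : Function.Periodic
      (fun j : ℤ => (2 * |sin ((2 * (j : ℝ) + 1) * π / (2 * N))|) ^ t) N := by
    intro j
    have : (2 * ((j + N : ℤ) : ℝ) + 1) * π / (2 * N) = (2 * j + 1) * π / (2 * N) + π := by
      push_cast
      field_simp
      ring
    simp only [this, sin_add_pi, abs_neg]
  rw [hper.sum_range_add c, mul_sum]
  refine sum_congr rfl fun m hm => ?_
  have hpos : 0 < sin ((2 * m + 1) * π / (2 * N)) := by
    apply sin_pos_of_pos_of_lt_pi (by positivity)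
    rw [div_lt_iff₀ (by positivity)]
    have hm' : (2 * m + 1 : ℝ) < 2 * N := by
      exact_mod_cast (show 2 * m + 1 < 2 * N by have := mem_range.mp hm; omega)
    nlinarith [pi_pos]
  rw [Int.cast_natCast, abs_of_pos hpos, mul_rpow zero_le_two hpos.le]

theorem riesz_potential_at_midpoint_general (s : ℝ) (n : ℕ) (ρ : ℂ)
    (hρ : ‖ρ‖ = 1) (j0 : ℤ) :
    ∑ j ∈ Finset.range (2 ^ n),
        ‖ρ * Complex.exp (((2 * Real.pi * (j : ℝ) / (2 ^ n : ℝ) : ℝ) : ℂ) * Complex.I)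
              - ρ * Complex.exp (((Real.pi * (2 * (j0 : ℝ) + 1) / (2 ^ n : ℝ) : ℝ) : ℂ)
                  * Complex.I)‖ ^ (-s)
      = Lrz s (2 ^ (n + 1)) / (2 ^ (n + 1) : ℝ) - Lrz s (2 ^ n) / (2 ^ n : ℝ) := by
  have hN : 0 < 2 ^ n := by positivity
  have h_term (j : ℕ) :
      ‖ρ * Complex.exp (((2 * π * (j : ℝ) / (2 ^ n : ℝ) : ℝ) : ℂ) * Complex.I)
          - ρ * Complex.exp (((π * (2 * (j0 : ℝ) + 1) / (2 ^ n : ℝ) : ℝ) : ℂ)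
              * Complex.I)‖
        = 2 * |sin ((2 * ((j + (-j0 - 1) : ℤ) : ℝ) + 1) * π / (2 * (2 ^ n : ℕ)))| := by
    rw [← mul_sub, norm_mul, hρ, one_mul, Complex.norm_exp_mul_I_sub_exp_mul_I]
    congr 3
    push_cast
    field_simp
    ring
  simp only [h_term]
  rw [sum_range_two_mul_abs_sin_odd_rpow (-s) hN, ← Lrz_two_mul_div_sub_Lrz_div s hN]
  simp only [pow_succ', Nat.cast_mul, Nat.cast_ofNat, Nat.cast_pow]

theorem riesz_potential_at_midpoint (s : ℝ) (hs : 0 < s) (n : ℕ) (ρ : ℂ)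
    (hρ : ‖ρ‖ = 1) (j0 : ℤ) :
    ∑ j ∈ Finset.range (2 ^ n),
        ‖ρ * Complex.exp (((2 * Real.pi * (j : ℝ) / (2 ^ n : ℝ) : ℝ) : ℂ) * Complex.I)
              - ρ * Complex.exp (((Real.pi * (2 * (j0 : ℝ) + 1) / (2 ^ n : ℝ) : ℝ) : ℂ)
                  * Complex.I)‖ ^ (-s)
      = Lrz s (2 ^ (n + 1)) / (2 ^ (n + 1) : ℝ) - Lrz s (2 ^ n) / (2 ^ n : ℝ) :=
  riesz_potential_at_midpoint_general s n ρ hρ j0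
end

section
/- Let (x_n)_{n=0}^∞ ⊂ S¹ be a sequence of pairwise distinct points on the unit circle, let ω_N = {x_0, x_1, …, x_{N−1}}, and suppose limsup_{N→∞} E_0(ω_N)/(N log N) = −1. Then lim_{N→∞} E_0(ω_N)/(N log N) = −1, and the normalized counting measures (1/N) Σ_{k=0}^{N−1} δ_{x_k} converge in the weak-star sense (i.e., tested against continuous functions on S¹) to the normalized arclength measure σ on S¹. -/
/-!
For `0 ≤ r < 1` and points `x i` of the closed unit disc, expanding `-log (1 - z)` as a power series
gives `∑ₘ rᵐ / m · |∑ᵢ x iᵐ|² = ∑ᵢ ∑ⱼ -log |1 - r · x i · conj (x j)|`. On the circle,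
`|1 - r · x i · conj (x j)| ≥ r · |x i - x j|`, so the right-hand side is at most
`E₀(ω_N) - N² log r - N log (1 - r)`, which for `r = 1 - 1/N` is at most `E₀(ω_N) + N log N + 2N`.

Since the series has nonnegative terms, `E₀(ω_N) ≥ -N log N - 2N`, so the liminf of
`E₀(ω_N) / (N log N)` is at least `-1`, the limsup. Once `E₀(ω_N) ≤ 0`, the `k`-th term gives
`|∑ᵢ x iᵏ|² ≤ 2k (N log N + 2N) = o(N²)`, so every Weyl sum is `o(N)`. Weyl's criterion follows because
the averaging functionals are `1`-Lipschitz on `C(𝕋, ℂ)`: the functions whose averages converge to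
their mean form a closed subspace, and it contains the Fourier monomials, whose span is dense.
-/

open Filter Topology

open Finset Complex ComplexConjugate

lemma mul_norm_one_sub_le_norm_one_sub_mul {w : ℂ} (hw : ‖w‖ = 1) {r : ℝ} (hr0 : 0 ≤ r)
    (hr1 : r ≤ 1) : r * ‖1 - w‖ ≤ ‖1 - r * w‖ := by
  have hsq : w.re * w.re + w.im * w.im = 1 := by
    rw [← normSq_apply, ← Complex.sq_norm, hw, one_pow]
  have hre : w.re ≤ 1 := (re_le_norm w).trans hw.le
  refine le_of_pow_le_pow_left₀ two_ne_zero (norm_nonneg _) ?_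
  rw [mul_pow, Complex.sq_norm, Complex.sq_norm, normSq_apply, normSq_apply]
  simp only [sub_re, sub_im, one_re, one_im, mul_re, mul_im, ofReal_re, ofReal_im]
  nlinarith [mul_nonneg (sub_nonneg.2 hr1) (mul_nonneg hr0 (sub_nonneg.2 hre))]

lemma norm_sub_eq_norm_one_sub_mul_conj {u v : ℂ} (hv : ‖v‖ = 1) :
    ‖u - v‖ = ‖1 - u * conj v‖ := by
  have hvv : conj v * v = 1 := by rw [conj_mul', hv]; norm_num
  rw [← mul_one (‖1 - u * conj v‖), ← hv, ← norm_mul, norm_sub_rev]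
  congr 1
  linear_combination u * hvv

lemma neg_log_norm_one_sub_mul_conj_le {u v : ℂ} (hu : ‖u‖ = 1) (hv : ‖v‖ = 1) (huv : u ≠ v)
    {r : ℝ} (hr0 : 0 < r) (hr1 : r ≤ 1) :
    -Real.log ‖1 - r * u * conj v‖ ≤ Real.log (1 / ‖u - v‖) - Real.log r := by
  have huv' : 0 < ‖u - v‖ := norm_pos_iff.2 (sub_ne_zero.2 huv)
  have hw : ‖u * conj v‖ = 1 := by rw [norm_mul, RCLike.norm_conj, hu, hv, one_mul]
  have key : r * ‖u - v‖ ≤ ‖1 - r * u * conj v‖ := by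
    rw [norm_sub_eq_norm_one_sub_mul_conj hv, mul_assoc]
    exact mul_norm_one_sub_le_norm_one_sub_mul hw hr0.le hr1
  have := Real.log_le_log (by positivity) key
  rw [Real.log_mul hr0.ne' huv'.ne', one_div, Real.log_inv] at *
  linarith

lemma norm_one_sub_mul_self_conj {u : ℂ} (hu : ‖u‖ = 1) (r : ℝ) :
    ‖1 - r * u * conj u‖ = |1 - r| := by
  rw [mul_assoc, mul_conj', hu, ofReal_one, one_pow, mul_one, ← ofReal_one, ← ofReal_sub, norm_real,
    Real.norm_eq_abs]

lemma hasSum_normSq_sum_pow {ι : Type*} (s : Finset ι) {x : ι → ℂ} (hx : ∀ i ∈ s, ‖x i‖ ≤ 1)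
    {r : ℝ} (hr0 : 0 ≤ r) (hr1 : r < 1) :
    HasSum (fun m : ℕ => r ^ m / m * normSq (∑ i ∈ s, x i ^ m))
      (∑ i ∈ s, ∑ j ∈ s, -Real.log ‖1 - r * x i * conj (x j)‖) := by
  have hlt : ∀ i ∈ s, ∀ j ∈ s, ‖(r : ℂ) * x i * conj (x j)‖ < 1 := fun i hi j hj => by
    rw [norm_mul, norm_mul, RCLike.norm_conj, norm_real, Real.norm_of_nonneg hr0]
    calc r * ‖x i‖ * ‖x j‖ ≤ r * 1 * 1 := by gcongr <;> simp [hx, hi, hj]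
      _ < 1 := by linarith
  have hlog := hasSum_sum fun i hi => hasSum_sum fun j hj =>
    Complex.hasSum_taylorSeries_neg_log (hlt i hi j hj)
  convert Complex.hasSum_re hlog using 1
  · ext m
    have : ∑ i ∈ s, ∑ j ∈ s, ((r : ℂ) * x i * conj (x j)) ^ m / m
        = (r ^ m / m : ℝ) * ((∑ i ∈ s, x i ^ m) * conj (∑ j ∈ s, x j ^ m)) := by
      simp_rw [map_sum, sum_mul_sum, mul_sum]
      refine sum_congr rfl fun i _ => sum_congr rfl fun j _ => ?_
      push_cast
      rw [map_pow]
      ring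
    rw [this, mul_conj, ← ofReal_mul, ofReal_re]
  · simp only [re_sum, neg_re, log_re]

lemma sum_neg_log_norm_one_sub_mul_conj_le {x : ℕ → ℂ} (hx : ∀ n, ‖x n‖ = 1)
    (hinj : Function.Injective x) {r : ℝ} (hr0 : 0 < r) (hr1 : r < 1) (N : ℕ) :
    ∑ i ∈ range N, ∑ j ∈ range N, -Real.log ‖1 - r * x i * conj (x j)‖ ≤
      logEnergy x N - N ^ 2 * Real.log r - N * Real.log (1 - r) := by
  have hterm : ∀ i j, -Real.log ‖1 - r * x i * conj (x j)‖ ≤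
      (if i ≠ j then Real.log (1 / ‖x i - x j‖) else 0) - Real.log r
        + (if i = j then -Real.log (1 - r) else 0) := by
    intro i j
    rcases eq_or_ne i j with rfl | hij
    · rw [norm_one_sub_mul_self_conj (hx i), abs_of_pos (sub_pos.2 hr1)]
      simp [Real.log_nonpos hr0.le hr1.le]
    · simpa [hij] using
        neg_log_norm_one_sub_mul_conj_le (hx i) (hx j) (hinj.ne hij) hr0 hr1.le
  refine (sum_le_sum fun i _ => sum_le_sum fun j _ => hterm i j).trans_eq ?_
  simp only [sum_add_distrib, sum_sub_distrib, sum_ite_eq, logEnergy]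
  simp [sum_ite_of_true]
  ring

/-- `limsup` of a real function that is not bounded above is the junk value `sInf ∅ = 0`. -/
lemma isBoundedUnder_le_of_limsup_ne_zero {α : Type*} {l : Filter α} {f : α → ℝ}
    (h : limsup f l ≠ 0) : IsBoundedUnder (· ≤ ·) l f := by
  by_contra hb
  have : {a | ∀ᶠ n in l, f n ≤ a} = ∅ := Set.eq_empty_of_forall_notMem fun a ha => hb ⟨a, ha⟩
  exact h (by rw [limsup_eq, this, Real.sInf_empty])

lemma tendsto_of_limsup_eq_of_tendsto_le {α : Type*} {l : Filter α} [l.NeBot] {f g : α → ℝ}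
    {a : ℝ} (ha : a ≠ 0) (hf : limsup f l = a) (hg : Tendsto g l (𝓝 a)) (hgf : g ≤ᶠ[l] f) :
    Tendsto f l (𝓝 a) := by
  have hle := isBoundedUnder_le_of_limsup_ne_zero (hf ▸ ha)
  have hge : IsBoundedUnder (· ≥ ·) l f := hg.isBoundedUnder_ge.mono_ge hgf
  refine tendsto_of_liminf_eq_limsup (le_antisymm (hf ▸ liminf_le_limsup hle hge) ?_) hf hle hge
  exact hg.liminf_eq ▸ liminf_le_liminf hgf hg.isBoundedUnder_ge hle.isCoboundedUnder_ge

section UnitCircleSequence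

variable {x : ℕ → ℂ} (hx : ∀ n, ‖x n‖ = 1) (hinj : Function.Injective x)
include hx hinj

lemma exists_hasSum_normSq_sum_pow_le {N : ℕ} (hN : 2 ≤ N) :
    ∃ T, HasSum (fun m : ℕ => (1 - (N : ℝ)⁻¹) ^ m / m * normSq (∑ i ∈ range N, x i ^ m)) T ∧
      T ≤ logEnergy x N + N * Real.log N + 2 * N := by
  have hN' : (2 : ℝ) ≤ N := by exact_mod_cast hN
  have hr0 : 0 < 1 - (N : ℝ)⁻¹ := by
    rw [sub_pos, inv_lt_one₀] <;> linarith
  have hr1 : 1 - (N : ℝ)⁻¹ < 1 := sub_lt_self _ (by positivity)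
  have hlog : -Real.log (1 - (N : ℝ)⁻¹) ≤ 2 / N := by
    rw [← Real.log_inv]
    refine (Real.log_le_sub_one_of_pos (inv_pos.2 hr0)).trans ?_
    have hN1 : (N : ℝ) - 1 ≠ 0 := by linarith
    have : (1 - (N : ℝ)⁻¹)⁻¹ = N / (N - 1) := by field_simp
    rw [this, div_sub_one hN1, div_le_div_iff₀] <;> nlinarith
  refine ⟨_, hasSum_normSq_sum_pow (range N) (fun i _ => (hx i).le) hr0.le hr1,
    (sum_neg_log_norm_one_sub_mul_conj_le hx hinj hr0 hr1 N).trans ?_⟩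
  rw [sub_sub_cancel, Real.log_inv]
  have : (N : ℝ) ^ 2 * (2 / N) = 2 * N := by field_simp
  nlinarith

lemma neg_mul_log_sub_le_logEnergy {N : ℕ} (hN : 2 ≤ N) :
    -(N * Real.log N) - 2 * N ≤ logEnergy x N := by
  obtain ⟨T, hT, hTle⟩ := exists_hasSum_normSq_sum_pow_le hx hinj hN
  have hr0 : 0 ≤ 1 - (N : ℝ)⁻¹ := sub_nonneg.2 (Nat.cast_inv_le_one N)
  have := hT.nonneg fun m =>
    mul_nonneg (div_nonneg (pow_nonneg hr0 m) m.cast_nonneg) (normSq_nonneg _)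
  linarith

lemma normSq_sum_pow_le {k N : ℕ} (hk : 0 < k) (hkN : 2 * k ≤ N) :
    normSq (∑ i ∈ range N, x i ^ k) ≤ 2 * k * (logEnergy x N + N * Real.log N + 2 * N) := by
  obtain ⟨T, hT, hTle⟩ := exists_hasSum_normSq_sum_pow_le hx hinj (N := N) (by omega)
  have hN : (2 * k : ℝ) ≤ N := by exact_mod_cast hkN
  have hk' : (1 : ℝ) ≤ k := by exact_mod_cast hk
  have hr0 : 0 ≤ 1 - (N : ℝ)⁻¹ := sub_nonneg.2 (Nat.cast_inv_le_one N)
  have hrk : (1 : ℝ) / 2 ≤ (1 - (N : ℝ)⁻¹) ^ k := by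
    have hbern := one_add_mul_le_pow (a := -(N : ℝ)⁻¹) (by
      rw [neg_le_neg_iff, inv_le_iff_one_le_mul₀] <;> linarith) k
    have : (k : ℝ) * (N : ℝ)⁻¹ ≤ 1 / 2 := by
      rw [← div_eq_mul_inv, div_le_iff₀] <;> linarith
    rw [← sub_eq_add_neg] at hbern
    linarith
  have hterm := le_hasSum hT k fun m _ =>
    mul_nonneg (div_nonneg (pow_nonneg hr0 m) m.cast_nonneg) (normSq_nonneg _)
  set S := normSq (∑ i ∈ range N, x i ^ k)
  have hS : 0 ≤ S := normSq_nonneg _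
  calc S ≤ 2 * (1 - (N : ℝ)⁻¹) ^ k * S := by nlinarith
    _ = 2 * k * ((1 - (N : ℝ)⁻¹) ^ k / k * S) := by field_simp
    _ ≤ 2 * k * (logEnergy x N + N * Real.log N + 2 * N) := by gcongr; linarith

lemma tendsto_logEnergy_div
    (hls : limsup (fun N : ℕ => logEnergy x N / (N * Real.log N)) atTop = -1) :
    Tendsto (fun N : ℕ => logEnergy x N / (N * Real.log N)) atTop (𝓝 (-1)) := by
  have hlog : Tendsto (fun N : ℕ => Real.log N) atTop atTop :=
    Real.tendsto_log_atTop.comp tendsto_natCast_atTop_atTop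
  refine tendsto_of_limsup_eq_of_tendsto_le (by norm_num) hls
    (g := fun N : ℕ => -1 - 2 / Real.log N) ?_ ?_
  · simpa using tendsto_const_nhds.sub (tendsto_const_nhds (x := (2 : ℝ)).div_atTop hlog)
  filter_upwards [eventually_ge_atTop 2] with N hN
  have hN' : (2 : ℝ) ≤ N := by exact_mod_cast hN
  have hpos : 0 < Real.log N := Real.log_pos (by linarith)
  rw [le_div_iff₀ (by positivity)]
  have : (-1 - 2 / Real.log N) * (N * Real.log N) = -(N * Real.log N) - 2 * N := by
    field_simp
  linarith [neg_mul_log_sub_le_logEnergy hx hinj hN]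

lemma tendsto_average_pow_of_logEnergy_nonpos (hE : ∀ᶠ N in atTop, logEnergy x N ≤ 0) {k : ℕ}
    (hk : 0 < k) :
    Tendsto (fun N : ℕ => (N : ℂ)⁻¹ * ∑ i ∈ range N, x i ^ k) atTop (𝓝 0) := by
  have hbound : Tendsto (fun N : ℕ => 2 * k * (Real.log N / N + 2 / N)) atTop (𝓝 0) := by
    have h1 := (Real.tendsto_pow_log_div_mul_add_atTop 1 0 1 one_ne_zero).comp
      tendsto_natCast_atTop_atTop
    have h2 := tendsto_const_nhds (x := (2 : ℝ)).div_atTop tendsto_natCast_atTop_atTop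
    simpa using (h1.add h2).const_mul (2 * k : ℝ)
  rw [tendsto_zero_iff_norm_tendsto_zero]
  refine squeeze_zero' (Eventually.of_forall fun N => norm_nonneg _) ?_
    (by simpa using (Real.continuous_sqrt.tendsto 0).comp hbound)
  filter_upwards [hE, eventually_ge_atTop (2 * k)] with N hEN hN
  have hN' : (0 : ℝ) < N := by exact_mod_cast (by omega : 0 < N)
  rw [Function.comp_apply, Real.le_sqrt (norm_nonneg _) (by positivity), norm_mul, mul_pow,
    norm_inv, Complex.norm_natCast, Complex.sq_norm]
  calc (N : ℝ)⁻¹ ^ 2 * normSq (∑ i ∈ range N, x i ^ k)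
      ≤ (N : ℝ)⁻¹ ^ 2 * (2 * k * (N * Real.log N + 2 * N)) := by
        gcongr
        exact (normSq_sum_pow_le hx hinj hk hN).trans (by gcongr; linarith)
    _ = 2 * k * (Real.log N / N + 2 / N) := by field_simp

end UnitCircleSequence

open MeasureTheory AddCircle

section Averages

variable {X : Type*} [TopologicalSpace X]

noncomputable def averageCLM (θ : ℕ → X) (N : ℕ) : C(X, ℂ) →L[ℂ] ℂ :=
  (N : ℂ)⁻¹ • ∑ k ∈ range N, ContinuousMap.evalCLM ℂ (θ k)

lemma averageCLM_apply (θ : ℕ → X) (N : ℕ) (g : C(X, ℂ)) :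
    averageCLM θ N g = (N : ℂ)⁻¹ * ∑ k ∈ range N, g (θ k) := by
  simp [averageCLM]

variable [CompactSpace X]

lemma norm_averageCLM_apply_le (θ : ℕ → X) (N : ℕ) (g : C(X, ℂ)) : ‖averageCLM θ N g‖ ≤ ‖g‖ := by
  rw [averageCLM_apply, norm_mul, norm_inv, Complex.norm_natCast]
  rcases N.eq_zero_or_pos with rfl | hN
  · simp
  calc (N : ℝ)⁻¹ * ‖∑ k ∈ range N, g (θ k)‖ ≤ (N : ℝ)⁻¹ * ∑ k ∈ range N, ‖g‖ := by
        gcongr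
        exact (norm_sum_le _ _).trans (sum_le_sum fun k _ => g.norm_coe_le_norm _)
    _ = ‖g‖ := by simp [hN.ne']

lemma lipschitzWith_averageCLM (θ : ℕ → X) (N : ℕ) : LipschitzWith 1 (averageCLM θ N) :=
  LipschitzWith.of_dist_le_mul fun g h => by
    simpa [dist_eq_norm, ← map_sub] using norm_averageCLM_apply_le θ N (g - h)

variable [MeasurableSpace X] [BorelSpace X] (μ : Measure X) [IsProbabilityMeasure μ]

lemma integrable_continuousMap (g : C(X, ℂ)) : Integrable g μ :=
  g.continuous.integrable_of_hasCompactSupport (.of_compactSpace _)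

lemma lipschitzWith_integral : LipschitzWith 1 fun g : C(X, ℂ) => ∫ x, g x ∂μ :=
  LipschitzWith.of_dist_le_mul fun g h => by
    rw [dist_eq_norm, dist_eq_norm, NNReal.coe_one, one_mul,
      ← integral_sub (integrable_continuousMap μ g) (integrable_continuousMap μ h)]
    simpa using norm_integral_le_of_norm_le_const (μ := μ)
      (Eventually.of_forall fun x => (g - h).norm_coe_le_norm x)

def convergentAverages (θ : ℕ → X) : Submodule ℂ C(X, ℂ) where
  carrier := {g | Tendsto (fun N => averageCLM θ N g) atTop (𝓝 (∫ x, g x ∂μ))}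
  add_mem' {g h} hg hh := by
    simpa [integral_add (integrable_continuousMap μ g) (integrable_continuousMap μ h)]
      using hg.add hh
  zero_mem' := by simp
  smul_mem' c g hg := by simpa [integral_const_mul] using hg.const_mul c

lemma isClosed_convergentAverages (θ : ℕ → X) : IsClosed (convergentAverages μ θ : Set C(X, ℂ)) :=
  (LipschitzWith.uniformEquicontinuous _ 1 (lipschitzWith_averageCLM θ)).equicontinuous
    |>.isClosed_setOfPred_tendsto (lipschitzWith_integral μ).continuous

end Averages

section WeylCriterion

variable {T : ℝ} [Fact (0 < T)]

lemma integral_fourier_haarAddCircle {n : ℤ} (hn : n ≠ 0) :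
    ∫ t, fourier n t ∂haarAddCircle (T := T) = 0 := by
  simpa [fourierCoeff, hn] using congr_fun (fourierCoeff_fourier (T := T) n) 0

theorem tendsto_averageCLM_of_tendsto_fourier (θ : ℕ → AddCircle T)
    (h : ∀ n : ℕ, 0 < n → Tendsto (fun N => averageCLM θ N (fourier n)) atTop (𝓝 0))
    (g : C(AddCircle T, ℂ)) :
    Tendsto (fun N => averageCLM θ N g) atTop (𝓝 (∫ t, g t ∂haarAddCircle)) := by
  have hfourier : ∀ n : ℤ, fourier n ∈ convergentAverages haarAddCircle θ := by
    intro n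
    show Tendsto _ _ _
    rcases lt_trichotomy n 0 with hn | rfl | hn
    · rw [integral_fourier_haarAddCircle hn.ne]
      obtain ⟨m, rfl⟩ : ∃ m : ℕ, n = -m := ⟨n.natAbs, by omega⟩
      have := (continuous_conj.tendsto 0).comp (h m (by omega))
      refine (map_zero (starRingEnd ℂ) ▸ this).congr fun N => ?_
      simp only [Function.comp_apply, averageCLM_apply, fourier_neg, map_mul, map_inv₀, map_natCast,
        map_sum]
    · have hone : ∀ᶠ N : ℕ in atTop, 1 = averageCLM θ N (fourier 0) := by
        filter_upwards [eventually_ne_atTop 0] with N hN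
        simp [averageCLM_apply, hN]
      simpa using tendsto_const_nhds.congr' hone
    · rw [integral_fourier_haarAddCircle hn.ne']
      obtain ⟨m, rfl⟩ : ∃ m : ℕ, n = m := ⟨n.natAbs, by omega⟩
      exact h m (by omega)
  have hspan := Submodule.topologicalClosure_minimal _
    (Submodule.span_le.2 (Set.range_subset_iff.2 hfourier)) (isClosed_convergentAverages _ θ)
  rw [span_fourier_closure_eq_top] at hspan
  exact hspan Submodule.mem_top

end WeylCriterion

lemma tendsto_average_of_tendsto_average_pow {x : ℕ → ℂ} (hx : ∀ n, ‖x n‖ = 1)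
    (h : ∀ k : ℕ, 0 < k → Tendsto (fun N : ℕ => (N : ℂ)⁻¹ * ∑ i ∈ range N, x i ^ k) atTop (𝓝 0))
    (f : ℂ → ℝ) (hf : ContinuousOn f {z : ℂ | ‖z‖ = 1}) :
    Tendsto (fun N : ℕ => (1 / (N : ℝ)) * ∑ k ∈ range N, f (x k)) atTop
      (𝓝 ((1 / (2 * Real.pi)) * ∫ t in (0 : ℝ)..(2 * Real.pi), f (exp (t * I)))) := by
  have hT : 0 < 2 * Real.pi := by positivity
  have : Fact (0 < 2 * Real.pi) := ⟨hT⟩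
  have hexp : ∀ t : ℝ, (toCircle (t : AddCircle (2 * Real.pi)) : ℂ) = exp (t * I) := by
    intro t
    rw [toCircle_apply_mk, div_self hT.ne', one_mul, Circle.coe_exp]
  let θ : ℕ → AddCircle (2 * Real.pi) := fun k => ((x k).arg : ℝ)
  have hθ : ∀ k, (toCircle (θ k) : ℂ) = x k := fun k => by
    rw [hexp]
    simpa [hx k] using norm_mul_exp_arg_mul_I (x k)
  let g : C(AddCircle (2 * Real.pi), ℂ) :=
    ⟨fun t => f (toCircle t), continuous_ofReal.comp (hf.comp_continuous
      (continuous_subtype_val.comp continuous_toCircle) fun t => Circle.norm_coe _)⟩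
  have hmain := tendsto_averageCLM_of_tendsto_fourier θ
    (fun n hn => by simpa [averageCLM_apply, fourier_apply, toCircle_nsmul, hθ] using h n hn) g
  have hint : ∫ t, g t ∂haarAddCircle = ((1 / (2 * Real.pi)) *
      ∫ t in (0 : ℝ)..(2 * Real.pi), f (exp (t * I)) : ℝ) := by
    have := AddCircle.intervalIntegral_preimage (2 * Real.pi) 0 g
    rw [zero_add] at this
    rw [integral_haarAddCircle, ← this]
    simp [g, hexp, intervalIntegral.integral_ofReal]
  have havg : ∀ N, averageCLM θ N g = ((1 / (N : ℝ)) * ∑ k ∈ range N, f (x k) : ℝ) := fun N => by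
    simp [averageCLM_apply, g, hθ]
  rw [hint, funext havg] at hmain
  exact tendsto_ofReal_iff.1 hmain

theorem general_sequence_equidistribution (x : ℕ → ℂ)
    (hx : ∀ n, ‖x n‖ = 1) (hinj : Function.Injective x)
    (hls : Filter.limsup (fun N : ℕ => logEnergy x N / ((N : ℝ) * Real.log N)) atTop = -1) :
    Tendsto (fun N : ℕ => logEnergy x N / ((N : ℝ) * Real.log N)) atTop (𝓝 (-1)) ∧
    ∀ f : ℂ → ℝ, ContinuousOn f {z : ℂ | ‖z‖ = 1} →
      Tendsto (fun N : ℕ => (1 / (N : ℝ)) * ∑ k ∈ Finset.range N, f (x k)) atTop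
        (𝓝 ((1 / (2 * Real.pi)) *
          ∫ t in (0 : ℝ)..(2 * Real.pi), f (Complex.exp ((t : ℂ) * Complex.I)))) := by
  have hlim := tendsto_logEnergy_div hx hinj hls
  have hE : ∀ᶠ N : ℕ in atTop, logEnergy x N ≤ 0 := by
    filter_upwards [hlim.eventually (gt_mem_nhds (by norm_num : (-1 : ℝ) < 0)),
      eventually_ge_atTop 2] with N hneg hN
    have hN' : (2 : ℝ) ≤ N := by exact_mod_cast hN
    exact (neg_of_div_neg_left hneg (mul_nonneg (by linarith) (Real.log_nonneg (by linarith)))).le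
  exact ⟨hlim, tendsto_average_of_tendsto_average_pow hx fun k hk =>
    tendsto_average_pow_of_logEnergy_nonpos hx hinj hE hk⟩
end
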